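/- Let η ≥ 0, let Δ ∈ ℝ^{d×d} be symmetric, and set F⁺ = F − η(G + ΔF), M_U = Uᵀ(F − ηG), M_V = Vᵀ(F − ηG). Then ‖Uᵀ F⁺ (F⁺)ᵀ U − D_S*‖ ≤ ‖M_U M_Uᵀ − D_S*‖ + η² ‖Δ‖² (‖S Sᵀ‖ + ‖T Tᵀ‖ + 2‖S Tᵀ‖) + 2η ‖M_U Sᵀ − D_S*‖ ‖Δ‖ + 2η ‖M_U Tᵀ‖ ‖Δ‖ + 2η ‖D_S*‖ ‖Δ‖. -/

import Mathlib

/-!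
With `B = Uᵀ Δ F` one has `Uᵀ F⁺ = M_U - η B`, so `Uᵀ F⁺ (F⁺)ᵀ U - D_S*` is `M_U M_Uᵀ - D_S*`
plus `η² B Bᵀ - η (M_U Bᵀ + B M_Uᵀ)`. The quadratic term is controlled by `‖B‖ ≤ ‖Δ‖ ‖F‖` and
`‖F‖² = ‖FᵀF‖ = ‖SᵀS + TᵀT‖`. For the cross term, inserting `U Uᵀ + V Vᵀ = 1` gives
`M_U Bᵀ = (M_U Sᵀ)(Uᵀ Δᵀ U) + (M_U Tᵀ)(Vᵀ Δᵀ U)`, and both compressions of `Δ` have norm at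
most `‖Δ‖`; finally `‖M_U Sᵀ‖ ≤ ‖M_U Sᵀ - D_S*‖ + ‖D_S*‖`.
-/

open Matrix
open scoped Matrix.Norms.L2Operator

namespace Matrix

variable {l m n o p : Type*}

lemma l2_opNorm_transpose [Fintype m] [Fintype n] [DecidableEq m] [DecidableEq n]
    (A : Matrix m n ℝ) : ‖Aᵀ‖ = ‖A‖ := by
  rw [← conjTranspose_eq_transpose_of_trivial, l2_opNorm_conjTranspose]

lemma l2_opNorm_transpose_mul_self [Fintype m] [Fintype n] [DecidableEq n] (A : Matrix m n ℝ) :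
    ‖Aᵀ * A‖ = ‖A‖ ^ 2 := by
  rw [← conjTranspose_eq_transpose_of_trivial, l2_opNorm_conjTranspose_mul_self, sq]

lemma l2_opNorm_mul_transpose_self [Fintype m] [Fintype n] [DecidableEq m] [DecidableEq n]
    (A : Matrix m n ℝ) : ‖A * Aᵀ‖ = ‖A‖ ^ 2 := by
  simpa only [transpose_transpose, l2_opNorm_transpose] using l2_opNorm_transpose_mul_self Aᵀ

lemma l2_opNorm_one_le {𝕜 : Type*} [RCLike 𝕜] [Fintype n] [DecidableEq n] :
    ‖(1 : Matrix n n 𝕜)‖ ≤ 1 := by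
  rw [← diagonal_one, l2_opNorm_diagonal]
  exact (pi_norm_const_le (1 : 𝕜)).trans_eq norm_one

lemma l2_opNorm_le_one_of_transpose_mul_self_eq_one [Fintype m] [Fintype n] [DecidableEq n]
    {A : Matrix m n ℝ} (hA : Aᵀ * A = 1) : ‖A‖ ≤ 1 := by
  have h : ‖A‖ ^ 2 ≤ 1 ^ 2 := by
    rw [← l2_opNorm_transpose_mul_self, hA, one_pow]
    exact l2_opNorm_one_le
  exact le_of_sq_le_sq h zero_le_one

lemma l2_opNorm_mul_mul_le_of_le_one {𝕜 : Type*} [RCLike 𝕜] [Fintype l] [Fintype m]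
    [Fintype n] [Fintype p] [DecidableEq m] [DecidableEq n] [DecidableEq p] {P : Matrix l m 𝕜}
    {R : Matrix n p 𝕜} (hP : ‖P‖ ≤ 1) (hR : ‖R‖ ≤ 1) (Q : Matrix m n 𝕜) : ‖P * Q * R‖ ≤ ‖Q‖ :=
  calc ‖P * Q * R‖ ≤ ‖P‖ * ‖Q‖ * ‖R‖ :=
        (l2_opNorm_mul _ _).trans (by gcongr; exact l2_opNorm_mul _ _)
    _ ≤ 1 * ‖Q‖ * 1 := by gcongr
    _ = ‖Q‖ := by ring

section Resolution

variable [Fintype m] [Fintype n] [Fintype p] [DecidableEq m]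
  {U : Matrix m n ℝ} {V : Matrix m p ℝ}

lemma transpose_eq_of_mul_transpose_add_eq_one (hUV : U * Uᵀ + V * Vᵀ = 1)
    (F : Matrix m l ℝ) : Fᵀ = (Uᵀ * F)ᵀ * Uᵀ + (Vᵀ * F)ᵀ * Vᵀ := by
  calc Fᵀ = Fᵀ * (U * Uᵀ + V * Vᵀ) := by rw [hUV, Matrix.mul_one]
    _ = _ := by simp only [transpose_mul, transpose_transpose, Matrix.mul_add, Matrix.mul_assoc]

lemma l2_opNorm_sq_le_of_mul_transpose_add_eq_one [Fintype l] [DecidableEq l]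
    (hUV : U * Uᵀ + V * Vᵀ = 1) (F : Matrix m l ℝ) : ‖F‖ ^ 2 ≤ ‖Uᵀ * F‖ ^ 2 + ‖Vᵀ * F‖ ^ 2 := by
  have hFF : Fᵀ * F = (Uᵀ * F)ᵀ * (Uᵀ * F) + (Vᵀ * F)ᵀ * (Vᵀ * F) := by
    conv_lhs => rw [transpose_eq_of_mul_transpose_add_eq_one hUV F]
    simp only [Matrix.add_mul, Matrix.mul_assoc]
  rw [← l2_opNorm_transpose_mul_self, hFF, ← l2_opNorm_transpose_mul_self,
    ← l2_opNorm_transpose_mul_self]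
  exact norm_add_le _ _

lemma l2_opNorm_mul_transpose_transpose_mul_mul_le [Fintype l] [Fintype o] [DecidableEq n]
    [DecidableEq p] (hUV : U * Uᵀ + V * Vᵀ = 1) (hU : ‖U‖ ≤ 1) (hV : ‖V‖ ≤ 1) (A : Matrix o l ℝ)
    (Δ : Matrix m m ℝ) (F : Matrix m l ℝ) :
    ‖A * (Uᵀ * (Δ * F))ᵀ‖ ≤ (‖A * (Uᵀ * F)ᵀ‖ + ‖A * (Vᵀ * F)ᵀ‖) * ‖Δ‖ := by
  have hUt : ‖Uᵀ‖ ≤ 1 := (l2_opNorm_transpose U).trans_le hU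
  have hVt : ‖Vᵀ‖ ≤ 1 := (l2_opNorm_transpose V).trans_le hV
  have hsplit : A * (Uᵀ * (Δ * F))ᵀ
      = A * (Uᵀ * F)ᵀ * (Uᵀ * Δᵀ * U) + A * (Vᵀ * F)ᵀ * (Vᵀ * Δᵀ * U) := by
    rw [transpose_mul, transpose_mul, transpose_transpose,
      transpose_eq_of_mul_transpose_add_eq_one hUV F]
    simp only [Matrix.mul_add, Matrix.add_mul, Matrix.mul_assoc]
  have hUΔU : ‖Uᵀ * Δᵀ * U‖ ≤ ‖Δ‖ :=
    (l2_opNorm_mul_mul_le_of_le_one hUt hU _).trans_eq (l2_opNorm_transpose Δ)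
  have hVΔU : ‖Vᵀ * Δᵀ * U‖ ≤ ‖Δ‖ :=
    (l2_opNorm_mul_mul_le_of_le_one hVt hU _).trans_eq (l2_opNorm_transpose Δ)
  calc ‖A * (Uᵀ * (Δ * F))ᵀ‖
      ≤ ‖A * (Uᵀ * F)ᵀ‖ * ‖Uᵀ * Δᵀ * U‖ + ‖A * (Vᵀ * F)ᵀ‖ * ‖Vᵀ * Δᵀ * U‖ := by
        rw [hsplit]
        exact (norm_add_le _ _).trans (add_le_add (l2_opNorm_mul _ _) (l2_opNorm_mul _ _))
    _ ≤ ‖A * (Uᵀ * F)ᵀ‖ * ‖Δ‖ + ‖A * (Vᵀ * F)ᵀ‖ * ‖Δ‖ := by gcongr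
    _ = (‖A * (Uᵀ * F)ᵀ‖ + ‖A * (Vᵀ * F)ᵀ‖) * ‖Δ‖ := by ring

lemma l2_opNorm_mul_transpose_self_transpose_mul_mul_le [Fintype l] [DecidableEq l]
    [DecidableEq n] [DecidableEq p] (hUV : U * Uᵀ + V * Vᵀ = 1) (hU : ‖U‖ ≤ 1)
    (Δ : Matrix m m ℝ) (F : Matrix m l ℝ) :
    ‖Uᵀ * (Δ * F) * (Uᵀ * (Δ * F))ᵀ‖
      ≤ ‖Δ‖ ^ 2 * (‖Uᵀ * F * (Uᵀ * F)ᵀ‖ + ‖Vᵀ * F * (Vᵀ * F)ᵀ‖) := by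
  have hB : ‖Uᵀ * (Δ * F)‖ ≤ ‖Δ‖ * ‖F‖ :=
    calc ‖Uᵀ * (Δ * F)‖ ≤ ‖Uᵀ‖ * (‖Δ‖ * ‖F‖) :=
          (l2_opNorm_mul _ _).trans (by gcongr; exact l2_opNorm_mul _ _)
      _ ≤ 1 * (‖Δ‖ * ‖F‖) := by rw [l2_opNorm_transpose]; gcongr
      _ = ‖Δ‖ * ‖F‖ := one_mul _
  rw [l2_opNorm_mul_transpose_self, l2_opNorm_mul_transpose_self, l2_opNorm_mul_transpose_self]
  calc ‖Uᵀ * (Δ * F)‖ ^ 2 ≤ ‖Δ‖ ^ 2 * ‖F‖ ^ 2 := by rw [← mul_pow]; gcongr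
    _ ≤ ‖Δ‖ ^ 2 * (‖Uᵀ * F‖ ^ 2 + ‖Vᵀ * F‖ ^ 2) := by
      gcongr
      exact l2_opNorm_sq_le_of_mul_transpose_add_eq_one hUV F

end Resolution

lemma l2_opNorm_sub_smul_mul_transpose_sub_le [Fintype m] [Fintype n] [DecidableEq m]
    [DecidableEq n] (A B : Matrix m n ℝ) (D : Matrix m m ℝ) (c : ℝ) :
    ‖(A - c • B) * (A - c • B)ᵀ - D‖
      ≤ ‖A * Aᵀ - D‖ + c ^ 2 * ‖B * Bᵀ‖ + 2 * |c| * ‖A * Bᵀ‖ := by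
  have hexpand : (A - c • B) * (A - c • B)ᵀ - D
      = (A * Aᵀ - D) + c ^ 2 • (B * Bᵀ) - c • (A * Bᵀ) - c • (A * Bᵀ)ᵀ := by
    simp only [transpose_sub, transpose_smul, transpose_mul, transpose_transpose, Matrix.sub_mul,
      Matrix.mul_sub, Matrix.smul_mul, Matrix.mul_smul, smul_sub, smul_smul]
    module
  rw [hexpand]
  refine (norm_sub_le _ _).trans ?_
  grw [norm_sub_le, norm_add_le]
  simp only [norm_smul, Real.norm_eq_abs, abs_pow, sq_abs, l2_opNorm_transpose]
  linarith

end Matrix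

theorem stmt_11_general
    (d k r : ℕ)
    (U : Matrix (Fin d) (Fin r) ℝ) (V : Matrix (Fin d) (Fin (d - r)) ℝ)
    (hU : Uᵀ * U = 1) (hV : Vᵀ * V = 1)
    (hUVc : U * Uᵀ + V * Vᵀ = 1)
    (DS : Matrix (Fin r) (Fin r) ℝ)
    (F : Matrix (Fin d) (Fin k) ℝ)
    (S : Matrix (Fin r) (Fin k) ℝ) (hS : S = Uᵀ * F)
    (T : Matrix (Fin (d - r)) (Fin k) ℝ) (hT : T = Vᵀ * F)
    (G : Matrix (Fin d) (Fin k) ℝ)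
    (η : ℝ) (hη : 0 ≤ η)
    (Δ : Matrix (Fin d) (Fin d) ℝ)
    (F' : Matrix (Fin d) (Fin k) ℝ) (hF' : F' = F - η • (G + Δ * F))
    (MU : Matrix (Fin r) (Fin k) ℝ) (hMU : MU = Uᵀ * (F - η • G)) :
    ‖Uᵀ * F' * F'ᵀ * U - DS‖
      ≤ ‖MU * MUᵀ - DS‖
        + η ^ 2 * ‖Δ‖ ^ 2 * (‖S * Sᵀ‖ + ‖T * Tᵀ‖ + 2 * ‖S * Tᵀ‖)
        + 2 * η * ‖MU * Sᵀ - DS‖ * ‖Δ‖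
        + 2 * η * ‖MU * Tᵀ‖ * ‖Δ‖
        + 2 * η * ‖DS‖ * ‖Δ‖ := by
  have hUn := l2_opNorm_le_one_of_transpose_mul_self_eq_one hU
  have hVn := l2_opNorm_le_one_of_transpose_mul_self_eq_one hV
  set B := Uᵀ * (Δ * F) with hB
  have hUF' : Uᵀ * F' = MU - η • B := by
    rw [hF', hMU, hB]
    simp only [Matrix.mul_sub, Matrix.mul_add, Matrix.mul_smul, smul_add]
    abel
  have hquad : ‖B * Bᵀ‖ ≤ ‖Δ‖ ^ 2 * (‖S * Sᵀ‖ + ‖T * Tᵀ‖ + 2 * ‖S * Tᵀ‖) := by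
    grw [l2_opNorm_mul_transpose_self_transpose_mul_mul_le hUVc hUn Δ F, ← hS, ← hT]
    gcongr ‖Δ‖ ^ 2 * ?_
    exact le_add_of_nonneg_right (by positivity)
  have hcross := l2_opNorm_mul_transpose_transpose_mul_mul_le hUVc hUn hVn MU Δ F
  rw [← hS, ← hT] at hcross
  have hMS := norm_le_norm_add_norm_sub' (MU * Sᵀ) DS
  rw [Matrix.mul_assoc, ← transpose_transpose U, ← transpose_mul, transpose_transpose, hUF']
  grw [l2_opNorm_sub_smul_mul_transpose_sub_le, abs_of_nonneg hη, hquad, hcross, hMS]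
  apply le_of_eq
  ring

/-- Deterministic decomposition bound for `‖S⁺ (S⁺)ᵀ - D_S*‖` after one
sample-gradient step `F⁺ = F - η (G + ΔF)`. -/
theorem stmt_11
    (d k r : ℕ) (hd : 0 < d) (hr : 0 < r) (hrk : r ≤ k) (hkd : k ≤ d)
    (U : Matrix (Fin d) (Fin r) ℝ) (V : Matrix (Fin d) (Fin (d - r)) ℝ)
    (hU : Uᵀ * U = 1) (hV : Vᵀ * V = 1) (hUV : Uᵀ * V = 0)
    (hUVc : U * Uᵀ + V * Vᵀ = 1)
    (DS : Matrix (Fin r) (Fin r) ℝ) (hDS : DS.IsDiag)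
    (DT : Matrix (Fin (d - r)) (Fin (d - r)) ℝ) (hDT : DT.IsDiag)
    (X : Matrix (Fin d) (Fin d) ℝ) (hX : X = U * DS * Uᵀ + V * DT * Vᵀ)
    (F : Matrix (Fin d) (Fin k) ℝ)
    (S : Matrix (Fin r) (Fin k) ℝ) (hS : S = Uᵀ * F)
    (T : Matrix (Fin (d - r)) (Fin k) ℝ) (hT : T = Vᵀ * F)
    (G : Matrix (Fin d) (Fin k) ℝ) (hG : G = (F * Fᵀ - X) * F)
    (η : ℝ) (hη : 0 ≤ η)
    (Δ : Matrix (Fin d) (Fin d) ℝ) (hΔ : Δ.IsSymm)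
    (F' : Matrix (Fin d) (Fin k) ℝ) (hF' : F' = F - η • (G + Δ * F))
    (MU : Matrix (Fin r) (Fin k) ℝ) (hMU : MU = Uᵀ * (F - η • G))
    (MV : Matrix (Fin (d - r)) (Fin k) ℝ) (hMV : MV = Vᵀ * (F - η • G)) :
    ‖Uᵀ * F' * F'ᵀ * U - DS‖
      ≤ ‖MU * MUᵀ - DS‖
        + η ^ 2 * ‖Δ‖ ^ 2 * (‖S * Sᵀ‖ + ‖T * Tᵀ‖ + 2 * ‖S * Tᵀ‖)
        + 2 * η * ‖MU * Sᵀ - DS‖ * ‖Δ‖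
        + 2 * η * ‖MU * Tᵀ‖ * ‖Δ‖
        + 2 * η * ‖DS‖ * ‖Δ‖ :=
  stmt_11_general d k r U V hU hV hUVc DS F S hS T hT G η hη Δ F' hF' MU hMU
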